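/- arXiv:1411.4380 — 5 statements merged into one kernel-verified Lean document; each statement's English description precedes it below -/
import Mathlib

section
/- The finite multiset functor ! on Rel, sending a set A to the set of finite multisets over A and a relation f : A → B to !f = {([a₁,…,aₙ],[b₁,…,bₙ]) | ∀i, (aᵢ,bᵢ) ∈ f}, is a functor: it preserves identities and composition of relations. -/
/-- Binary relations between sets, as morphisms of the category `Rel`. -/
abbrev Rel' (A B : Type) := Set (A × B)

/-- Relational composition (diagrammatic order). -/
def rcomp {A B C : Type} (f : Rel' A B) (g : Rel' B C) : Rel' A C :=
  {p | ∃ b, (p.1, b) ∈ f ∧ (b, p.2) ∈ g}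

/-- The identity relation. -/
def rid (A : Type) : Rel' A A := {p | p.1 = p.2}

/-- The action of the finite multiset functor `!` on a relation `f : A → B`:
`!f` relates `[a₁,…,aₙ]` to `[b₁,…,bₙ]` when there is a matching pairing each `aᵢ`
with `bᵢ` such that `(aᵢ,bᵢ) ∈ f`. -/
def bangRel {A B : Type} (f : Rel' A B) : Rel' (Multiset A) (Multiset B) :=
  {p | ∃ l : List (A × B), (∀ q ∈ l, q ∈ f) ∧
        p.1 = ↑(l.map Prod.fst) ∧ p.2 = ↑(l.map Prod.snd)}

/-!
Under the dictionary `(s, t) ∈ !f ↔ Multiset.Rel (fun a b => (a, b) ∈ f) s t`, functoriality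
reduces to two facts about lifting relations to multisets: the lift of equality is equality, and
lifting commutes with composition. For the latter, a matching of `s` with `u` through `f ∘ g`
splits into matchings `s ~ t` and `t ~ u` by recording the intermediate witnesses as `t`;
conversely, matchings `s ~ t` and `t ~ u` are glued along `t` by peeling off one element of `t`
at a time.
-/

theorem Multiset.rel_comp {α β γ : Type*} (r : α → β → Prop) (p : β → γ → Prop) :
    Multiset.Rel (Relation.Comp r p) = Relation.Comp (Multiset.Rel r) (Multiset.Rel p) := by
  ext s u
  constructor
  · intro h
    induction h with
    | zero => exact ⟨0, .zero, .zero⟩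
    | cons hac _ ih =>
      obtain ⟨b, hab, hbc⟩ := hac
      obtain ⟨t, hst, htu⟩ := ih
      exact ⟨b ::ₘ t, .cons hab hst, .cons hbc htu⟩
  · rintro ⟨t, hst, htu⟩
    induction hst generalizing u with
    | zero => rw [Multiset.rel_zero_left.mp htu]; exact .zero
    | cons hab _ ih =>
      obtain ⟨c, u', hbc, htu', rfl⟩ := Multiset.rel_cons_left.mp htu
      exact .cons ⟨_, hab, hbc⟩ (ih _ htu')

theorem mem_bangRel_iff {A B : Type} {f : Rel' A B} {s : Multiset A} {t : Multiset B} :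
    (s, t) ∈ bangRel f ↔ Multiset.Rel (fun a b => (a, b) ∈ f) s t := by
  constructor
  · rintro ⟨l, hl, rfl, rfl⟩
    induction l with
    | nil => exact .zero
    | cons q l ih =>
      obtain ⟨hq, hl⟩ := List.forall_mem_cons.mp hl
      exact .cons (r := fun a b => (a, b) ∈ f) hq (ih hl)
  · intro h
    induction h with
    | zero => exact ⟨[], by simp, rfl, rfl⟩
    | @cons a b _ _ hab _ ih =>
      obtain ⟨l, hl, rfl, rfl⟩ := ih
      exact ⟨(a, b) :: l, List.forall_mem_cons.mpr ⟨hab, hl⟩, rfl, rfl⟩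

/-- The finite multiset functor `!` on `Rel` preserves identities and
composition of relations, i.e. it is a functor. -/
theorem bang_is_functor :
    (∀ A : Type, bangRel (rid A) = rid (Multiset A)) ∧
    (∀ (A B C : Type) (f : Rel' A B) (g : Rel' B C),
      bangRel (rcomp f g) = rcomp (bangRel f) (bangRel g)) := by
  refine ⟨fun A => ?_, fun A B C f g => ?_⟩
  · ext ⟨s, t⟩
    exact mem_bangRel_iff.trans Multiset.rel_eq
  · ext ⟨s, u⟩
    have hcomp := Multiset.rel_comp (fun a b => (a, b) ∈ f) (fun b c => (b, c) ∈ g)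
    exact mem_bangRel_iff.trans <| (congrFun₂ hcomp s u).to_iff.trans <|
      exists_congr fun t => and_congr mem_bangRel_iff.symm mem_bangRel_iff.symm
end

section
/- The dereliction relation der_A = {([a], a) | a ∈ A} : !A → A and the digging relation dig_A = {(w₁+⋯+w_k, [w₁,…,w_k]) | wᵢ ∈ !A} : !A → !!A make (!, dig, der) a comonad on the category Rel. -/
/-- Dereliction `der_A = {([a],a) | a ∈ A} : !A → A`. -/
def der (A : Type) : Rel' (Multiset A) A := {p | p.1 = {p.2}}

/-- Digging `dig_A = {(w₁+⋯+w_k, [w₁,…,w_k])} : !A → !!A`. -/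
def dig (A : Type) : Rel' (Multiset A) (Multiset (Multiset A)) :=
  {p | p.1 = p.2.sum}

lemma sum_fst_singleton {A : Type} (l : List (Multiset A × A))
    (h : ∀ q ∈ l, q.1 = ({q.2} : Multiset A)) :
    (↑(l.map Prod.fst) : Multiset (Multiset A)).sum = ↑(l.map Prod.snd) := by
  induction l with
  | nil => simp
  | cons q l ih =>
      simp only [List.map_cons, Multiset.sum_coe, List.sum_cons] at *
      rw [h q (by simp), ih (fun q hq => h q (by simp [hq]))]
      rfl

lemma sum_fst_sum {A : Type} (l : List (Multiset A × Multiset (Multiset A)))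
    (h : ∀ q ∈ l, q.1 = q.2.sum) :
    (↑(l.map Prod.fst) : Multiset (Multiset A)).sum =
      ((↑(l.map Prod.snd) : Multiset (Multiset (Multiset A))).sum).sum := by
  induction l with
  | nil => simp
  | cons q l ih =>
      simp only [List.map_cons, Multiset.sum_coe, List.sum_cons] at *
      rw [h q (by simp), ih (fun q hq => h q (by simp [hq])), Multiset.sum_add]

lemma coe_toList_map {A B : Type} (m : Multiset A) (f : A → B) :
    (↑(m.toList.map f) : Multiset B) = m.map f := by
  rw [← Multiset.map_coe, Multiset.coe_toList]

lemma sum_sum_aux {A : Type} (T : Multiset (Multiset (Multiset A))) :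
    (T.map Multiset.sum).sum = T.sum.sum := by
  induction T using Multiset.induction with
  | empty => simp
  | cons t T ih => simp [ih]

/-- dereliction and digging make `(!, dig, der)` a comonad on `Rel`:
the counit laws `der_{!A} ∘ dig_A = id`, `!der_A ∘ dig_A = id` and the coassociativity
law `dig_{!A} ∘ dig_A = !dig_A ∘ dig_A` hold. -/
theorem bang_comonad :
    (∀ A : Type, rcomp (dig A) (der (Multiset A)) = rid (Multiset A)) ∧
    (∀ A : Type, rcomp (dig A) (bangRel (der A)) = rid (Multiset A)) ∧
    (∀ A : Type, rcomp (dig A) (dig (Multiset A)) = rcomp (dig A) (bangRel (dig A))) := by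
  refine ⟨fun A => ?_, fun A => ?_, fun A => ?_⟩
  · ext ⟨m, m'⟩
    constructor
    · rintro ⟨b, h1, h2⟩
      simp only [dig, der, Set.mem_setOf_eq] at h1 h2
      simp [rid, h1, h2]
    · rintro h
      simp only [rid, Set.mem_setOf_eq] at h
      exact ⟨{m'}, by simp [dig, h], by simp [der]⟩
  · ext ⟨m, m'⟩
    constructor
    · rintro ⟨b, h1, l, hl, hb, hm'⟩
      simp only [dig, Set.mem_setOf_eq] at h1
      dsimp only at hb hm'
      have : (∀ q ∈ l, q.1 = ({q.2} : Multiset A)) := fun q hq => hl q hq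
      simp only [rid, Set.mem_setOf_eq]
      rw [h1, hb, hm', sum_fst_singleton l this]
    · rintro h
      simp only [rid, Set.mem_setOf_eq] at h
      refine ⟨m.map (fun a => ({a} : Multiset A)), ?_,
        m.toList.map (fun a => (({a} : Multiset A), a)), ?_, ?_, ?_⟩
      · simp [dig, Multiset.sum_map_singleton]
      · intro q hq
        simp only [List.mem_map] at hq
        obtain ⟨a, _, rfl⟩ := hq
        simp [der]
      · simp only [List.map_map, Function.comp_def]
        rw [coe_toList_map]
      · simp only [List.map_map, Function.comp_def]
        rw [coe_toList_map]
        simp [h]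
  · ext ⟨m, T⟩
    constructor
    · rintro ⟨b, h1, h2⟩
      simp only [dig, Set.mem_setOf_eq] at h1 h2
      refine ⟨T.map Multiset.sum, ?_,
        T.toList.map (fun t => (t.sum, t)), ?_, ?_, ?_⟩
      · simp only [dig, Set.mem_setOf_eq]
        rw [h1, h2, sum_sum_aux]
      · intro q hq
        simp only [List.mem_map] at hq
        obtain ⟨t, _, rfl⟩ := hq
        simp [dig]
      · simp only [List.map_map, Function.comp_def]
        rw [coe_toList_map]
      · simp only [List.map_map, Function.comp_def]
        rw [coe_toList_map]
        simp
    · rintro ⟨b, h1, l, hl, hb, hT⟩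
      simp only [dig, Set.mem_setOf_eq] at h1
      dsimp only at hb hT
      refine ⟨T.sum, ?_, ?_⟩
      · simp only [dig, Set.mem_setOf_eq]
        rw [h1, hb, hT]
        exact sum_fst_sum l (fun q hq => hl q hq)
      · simp [dig]
end

section
/- For any relation f : !X ⊗ !A → A in Rel and any element a ∈ A, and any finite run-tree t of f rooted at a, the pair (leaves(t), a) with leaves(t) the multiset of X-labels at the leaves of t belongs to the least fixed point of the map Φ_f on relations !X → A defined by Φ_f(r) = {(w₀+w₁+⋯+wₙ, b) | ((w₀,[a₁,…,aₙ]), b) ∈ f and (wᵢ, aᵢ) ∈ r for all i}. -/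
/-- `Run f w a` holds iff there is a finite run-tree of the relation
`f : !X ⊗ !A → A` rooted at `a ∈ A` whose multiset of `X`-labels at the
leaves is `w`: the root is labelled `a`, inner nodes are labelled in `A`,
leaves in `X ⊎ A`, a node labelled `b` with `X`-children `w₀` and `A`-children
`a₁,…,aₙ` (with subtrees) satisfies `((w₀,[a₁,…,aₙ]),b) ∈ f` (the leaf case
being `w₀ = 0`, `n = 0`, i.e. `(([],[]),b) ∈ f`). -/
inductive Run {X A : Type} (f : Set ((Multiset X × Multiset A) × A)) :
    Multiset X → A → Prop where
  | node (w₀ : Multiset X) (l : List (Multiset X × A)) (b : A)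
      (hf : ((w₀, ↑(l.map Prod.snd)), b) ∈ f)
      (ih : ∀ p ∈ l, Run f p.1 p.2) :
      Run f (w₀ + (l.map Prod.fst).sum) b

/-- The monotone map `Φ_f` on relations `!X → A`:
`Φ_f(r) = {(w₀+w₁+⋯+wₙ, b) | ((w₀,[a₁,…,aₙ]),b) ∈ f and (wᵢ,aᵢ) ∈ r}`. -/
def phi {X A : Type} (f : Set ((Multiset X × Multiset A) × A)) :
    Set (Multiset X × A) →o Set (Multiset X × A) :=
  ⟨fun r => {p | ∃ (w₀ : Multiset X) (l : List (Multiset X × A)) (b : A),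
      p = (w₀ + (l.map Prod.fst).sum, b) ∧
      ((w₀, ↑(l.map Prod.snd)), b) ∈ f ∧ ∀ q ∈ l, q ∈ r}, by
    intro r s hrs p hp
    obtain ⟨w₀, l, b, hpe, hf, hl⟩ := hp
    exact ⟨w₀, l, b, hpe, hf, fun q hq => hrs (hl q hq)⟩⟩

/-- for any relation `f : !X ⊗ !A → A` in `Rel`, any `a ∈ A` and any
finite run-tree of `f` rooted at `a`, the pair `(leaves(t), a)` belongs to the least
fixed point of `Φ_f`. -/
theorem run_in_lfp {X A : Type} (f : Set ((Multiset X × Multiset A) × A))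
    (w : Multiset X) (a : A) (h : Run f w a) : (w, a) ∈ OrderHom.lfp (phi f) := by
  induction h with
  | node w₀ l b hf _ ih =>
    have : (w₀ + (l.map Prod.fst).sum, b) ∈ phi f (OrderHom.lfp (phi f)) :=
      ⟨w₀, l, b, rfl, hf, fun q hq => ih q hq⟩
    rwa [OrderHom.map_lfp] at this
end

section
/- For a countable set A, there is a one-to-one correspondence between finite-or-countable multisets over A (functions A → ℕ∞ with countable support) and equivalence classes of finite or infinite words over the alphabet A under the relation w₁ ≃ w₂ iff for every finite word u, u ⊑ w₁ ⇔ u ⊑ w₂, where u ⊑ w means some finite prefix of w is, up to permutation of letters, an extension of u. -/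
/-!
Prefixes of a word form a chain, so finitely many lower bounds on letter counts, each attained
by some prefix, are attained by a single one. Hence `u ⊑ w` holds iff every letter occurs in `u`
at most as often as its multiplicity in `w`, the supremum of its counts over the prefixes of `w`,
and two words are equivalent iff they have the same multiplicities. Conversely, a multiset `m`
with countable support is the multiplicity function of any word listing the first coordinates of
an enumeration of the countable set `{(a, i) | i < m a}`.
-/

/-- Finite or infinite words over an alphabet `A`. -/
def Word (A : Type) := List A ⊕ (ℕ → A)

/-- The finite prefixes of a finite or infinite word. -/
def prefixes {A : Type} : Word A → Set (List A)
  | .inl l => {v | v <+: l}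
  | .inr f => {v | ∃ n : ℕ, v = (List.range n).map f}

/-- `u ⊑ w`: some finite prefix `v` of `w` extends `u` up to permutation of letters,
i.e. the multiset of letters of `u` is contained in the multiset of letters of a
finite prefix of `w`. -/
def wordLe {A : Type} (u : List A) (w : Word A) : Prop :=
  ∃ v ∈ prefixes w, (↑u : Multiset A) ≤ ↑v

/-- The equivalence `w₁ ≃ w₂ ⟺ ∀ u, u ⊑ w₁ ↔ u ⊑ w₂`. -/
def wordEquiv {A : Type} (w₁ w₂ : Word A) : Prop :=
  ∀ u : List A, wordLe u w₁ ↔ wordLe u w₂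

theorem Directed.iSup_encard_eq_encard_iUnion {α ι : Type*} [Nonempty ι] {s : ι → Set α}
    (hs : Directed (· ⊆ ·) s) : ⨆ i, (s i).encard = (⋃ i, s i).encard := by
  refine le_antisymm (iSup_le fun i => Set.encard_mono (Set.subset_iUnion s i))
    (ENat.forall_natCast_le_iff_le.1 fun k hk => ?_)
  obtain ⟨t, hts, htk⟩ := Set.exists_subset_encard_eq hk
  have ht := Set.finite_of_encard_eq_coe htk
  obtain ⟨i, hti⟩ := hs.exists_mem_subset_of_finset_subset_biUnion (ht.coe_toFinset ▸ hts)
  calc (k : ℕ∞) = t.encard := htk.symm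
    _ ≤ (s i).encard := Set.encard_mono (ht.coe_toFinset ▸ hti)
    _ ≤ ⨆ i, (s i).encard := le_iSup (fun i => (s i).encard) i

theorem ENat.exists_natCast_le_of_le_iSup {ι : Type*} [Nonempty ι] {f : ι → ℕ∞} {k : ℕ}
    (h : (k : ℕ∞) ≤ ⨆ i, f i) : ∃ i, (k : ℕ∞) ≤ f i := by
  cases k with
  | zero => exact ⟨Classical.arbitrary ι, by simp⟩
  | succ k =>
    obtain ⟨i, hi⟩ :=
      lt_iSup_iff.1 ((ENat.add_one_le_iff (ENat.natCast_ne_top k)).1 (by exact_mod_cast h))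
    exact ⟨i, by exact_mod_cast Order.add_one_le_of_lt hi⟩

theorem ENat.encard_setOf_natCast_lt (k : ℕ∞) : {i : ℕ | (i : ℕ∞) < k}.encard = k := by
  induction k using ENat.recTopCoe with
  | top => simp [Set.encard_univ, ENat.card_eq_top_of_infinite]
  | coe k =>
    have : {i : ℕ | (i : ℕ∞) < k} = ↑(Finset.range k) := by ext; simp
    rw [this, Set.encard_coe_eq_coe_finsetCard, Finset.card_range]

namespace Word

variable {A : Type}

def take : Word A → ℕ → List A
  | .inl l, n => l.take n
  | .inr f, n => (List.range n).map f

theorem prefixes_eq_range_take (w : Word A) : prefixes w = Set.range w.take := by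
  ext v
  cases w with
  | inl l =>
    exact ⟨fun h => ⟨_, (List.prefix_iff_eq_take.1 h).symm⟩, fun ⟨n, h⟩ => h ▸ l.take_prefix n⟩
  | inr f => exact ⟨fun ⟨n, h⟩ => ⟨n, h.symm⟩, fun ⟨n, h⟩ => ⟨n, h.symm⟩⟩

theorem take_prefix_take (w : Word A) {m n : ℕ} (h : m ≤ n) : w.take m <+: w.take n := by
  cases w with
  | inl l => exact List.take_prefix_take_left h
  | inr f =>
    simpa [take, List.take_range, Nat.min_eq_left h] using ((List.range n).take_prefix m).map f

theorem wordLe_iff_exists_subperm_take {u : List A} {w : Word A} :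
    wordLe u w ↔ ∃ n, u.Subperm (w.take n) := by
  simp only [wordLe, prefixes_eq_range_take, Set.exists_range_iff, Multiset.coe_le]

variable [DecidableEq A]

noncomputable def count (w : Word A) (a : A) : ℕ∞ :=
  ⨆ n, ((w.take n).count a : ℕ∞)

theorem count_take_le (w : Word A) (n : ℕ) (a : A) : ((w.take n).count a : ℕ∞) ≤ w.count a :=
  le_iSup (fun n => ((w.take n).count a : ℕ∞)) n

theorem wordLe_iff_count_le {u : List A} {w : Word A} :
    wordLe u w ↔ ∀ a, (u.count a : ℕ∞) ≤ w.count a := by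
  rw [wordLe_iff_exists_subperm_take]
  constructor
  · rintro ⟨n, hn⟩ a
    exact (Nat.cast_le.2 (hn.count_le a)).trans (w.count_take_le n a)
  · intro h
    have hev : ∀ a ∈ u.toFinset, ∀ᶠ n in Filter.atTop, u.count a ≤ (w.take n).count a := by
      intro a _
      obtain ⟨n, hn⟩ := ENat.exists_natCast_le_of_le_iSup (h a)
      replace hn : u.count a ≤ (w.take n).count a := by exact_mod_cast hn
      exact Filter.eventually_atTop.2
        ⟨n, fun m hm => hn.trans ((w.take_prefix_take hm).count_le a)⟩
    obtain ⟨n, hn⟩ := ((Filter.eventually_all_finset _).2 hev).exists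
    exact ⟨n, List.subperm_ext_iff.2 fun a ha => hn a (List.mem_toFinset.2 ha)⟩

theorem replicate_wordLe_iff {w : Word A} {a : A} {k : ℕ} :
    wordLe (List.replicate k a) w ↔ (k : ℕ∞) ≤ w.count a := by
  rw [wordLe_iff_count_le]
  refine ⟨fun h => by simpa using h a, fun h b => ?_⟩
  rcases eq_or_ne a b with rfl | hab
  · simpa using h
  · simp [List.count_replicate, hab]

theorem wordEquiv_iff_count_eq {w₁ w₂ : Word A} : wordEquiv w₁ w₂ ↔ w₁.count = w₂.count := by
  refine ⟨fun h => funext fun a => ?_, fun h u => by simp only [wordLe_iff_count_le, h]⟩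
  refine le_antisymm (ENat.forall_natCast_le_iff_le.1 fun k hk => ?_)
    (ENat.forall_natCast_le_iff_le.1 fun k hk => ?_)
  · exact replicate_wordLe_iff.1 ((h _).1 (replicate_wordLe_iff.2 hk))
  · exact replicate_wordLe_iff.1 ((h _).2 (replicate_wordLe_iff.2 hk))

theorem countable_support_count (w : Word A) : {a | w.count a ≠ 0}.Countable := by
  refine (Set.countable_iUnion fun n => (w.take n).finite_toSet.countable).mono fun a ha => ?_
  simp only [Set.mem_ofPred_eq, count, ne_eq, ENat.iSup_eq_zero, not_forall, Nat.cast_eq_zero,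
    List.count_eq_zero, not_not] at ha
  exact Set.mem_iUnion.2 ha

theorem count_inl (l : List A) (a : A) : count (.inl l) a = l.count a := by
  refine le_antisymm (iSup_le fun n => ?_) ?_
  · exact_mod_cast (l.take_prefix n).count_le a
  · simpa [take] using count_take_le (.inl l) l.length a

theorem count_map_range (f : ℕ → A) (n : ℕ) (a : A) :
    (((List.range n).map f).count a : ℕ∞) = (f ⁻¹' {a} ∩ Set.Iio n).encard := by
  have : f ⁻¹' {a} ∩ Set.Iio n = ↑({k ∈ Finset.range n | a = f k}) := by
    ext; simp [and_comm, eq_comm]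
  rw [this, Set.encard_coe_eq_coe_finsetCard, ← Multiset.coe_count, ← Multiset.map_coe,
    Multiset.count_map]
  rfl

theorem count_inr (f : ℕ → A) (a : A) : count (.inr f) a = (f ⁻¹' {a}).encard := by
  have hmono : Monotone fun n : ℕ => f ⁻¹' {a} ∩ Set.Iio n :=
    fun m n h => Set.inter_subset_inter_right _ (Set.Iio_subset_Iio h)
  simp only [count, take, count_map_range, hmono.directed_le.iSup_encard_eq_encard_iUnion,
    ← Set.inter_iUnion, Set.iUnion_Iio, Set.inter_univ]

theorem exists_count_eq_encard_fiber {S : Type} [Countable S] (p : S → A) :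
    ∃ w : Word A, ∀ a, w.count a = (p ⁻¹' {a}).encard := by
  rcases finite_or_infinite S with _ | _
  · have := Fintype.ofFinite S
    refine ⟨.inl (Finset.univ.toList.map p), fun a => ?_⟩
    have : p ⁻¹' {a} = ↑({s | a = p s} : Finset S) := by ext; simp [eq_comm]
    rw [count_inl, this, Set.encard_coe_eq_coe_finsetCard, ← Multiset.coe_count,
      ← Multiset.map_coe, Finset.coe_toList, Multiset.count_map]
    rfl
  · obtain ⟨_⟩ := nonempty_denumerable S
    refine ⟨.inr (p ∘ (Denumerable.eqv S).symm), fun a => ?_⟩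
    rw [count_inr, Set.preimage_comp,
      Set.encard_preimage_of_bijective (Denumerable.eqv S).symm.bijective]

theorem exists_count_eq {m : A → ℕ∞} (hm : {a | m a ≠ 0}.Countable) :
    ∃ w : Word A, w.count = m := by
  let S : Set (A × ℕ) := {x | (x.2 : ℕ∞) < m x.1}
  have hS : S.Countable := (hm.prod (Set.countable_univ (α := ℕ))).mono fun x hx =>
    Set.mem_prod.2 ⟨ne_bot_of_gt hx, Set.mem_univ _⟩
  have := hS.to_subtype
  obtain ⟨w, hw⟩ := exists_count_eq_encard_fiber fun x : S => x.1.1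
  refine ⟨w, funext fun a => ?_⟩
  let e : (fun x : S => x.1.1) ⁻¹' {a} ≃ {i : ℕ | (i : ℕ∞) < m a} :=
    { toFun := fun x => ⟨x.1.1.2, by obtain ⟨⟨_, hi⟩, rfl⟩ := x; exact hi⟩
      invFun := fun i => ⟨⟨(a, i), i.2⟩, rfl⟩
      left_inv := by rintro ⟨⟨⟨b, i⟩, hi⟩, rfl : b = a⟩; rfl
      right_inv := fun i => rfl }
  rw [hw, Set.encard_congr e, ENat.encard_setOf_natCast_lt]

end Word

theorem multiset_word_correspondence_general (A : Type) :
    Nonempty ({m : A → ℕ∞ // Set.Countable {a | m a ≠ 0}} ≃ Quot (@wordEquiv A)) := by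
  classical
  have hrange : Set.range (Word.count (A := A)) = {m | {a | m a ≠ 0}.Countable} :=
    Set.ext fun m => ⟨by rintro ⟨w, rfl⟩; exact w.countable_support_count,
      Word.exists_count_eq⟩
  exact ⟨(Equiv.setCongr hrange).symm.trans <|
    (Setoid.quotientKerEquivRange Word.count).symm.trans <|
      Quot.congrRight fun _ _ => Word.wordEquiv_iff_count_eq.symm⟩

/-- for a countable set `A`, there is a one-to-one correspondence
between finite-or-countable multisets over `A` (functions `A → ℕ∞` with countable
support) and equivalence classes of finite or infinite words over `A` under `≃`. -/
theorem multiset_word_correspondence (A : Type) [Countable A] :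
    Nonempty ({m : A → ℕ∞ // Set.Countable {a | m a ≠ 0}} ≃ Quot (@wordEquiv A)) :=
  multiset_word_correspondence_general A
end

section
/- The dereliction der_A = {([a],a) | a ∈ A} : §A → A and digging dig_A relating Σᵢ wᵢ to [w₁, w₂, …] for any finite or countable family wᵢ ∈ §A, make the finite-or-countable multiset construction § a comonad on the category of sets (of cardinality at most 2^ℵ₀) and relations. -/
/-!
Summing a function along an enumeration of a finite-or-countable multiset is integrating it
against the multiset (`realizes.tsum_elim`). Hence `dig_A` is the converse of the graph of the
multiplication `join : §§A → §A` of the finite-or-countable multiset monad, `der_A` is the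
converse of the graph of `single`, and `§` sends the converse of the graph of `g` to the converse
of the graph of `map g`. The comonad laws thus become the monad laws `join ∘ single = id`,
`join ∘ map single = id` and `join ∘ join = join ∘ map join`, which are exchanges of the order
of summation in `ℕ∞`, where every family is summable.
-/

open Classical

/-- `§A`: the set of finite-or-countable multisets over `A`, i.e. functions
`A → ℕ∞` with finite or countable support. -/
def SMul' (A : Type) := {m : A → ℕ∞ // Set.Countable {a | m a ≠ 0}}

/-- The number of occurrences (in `ℕ∞`) of `a` in the finite-or-countable family
`w : ℕ → Option A`, as the supremum of finite counts. -/
noncomputable def occCount {A : Type} (w : ℕ → Option A) (a : A) : ℕ∞ :=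
  ⨆ s : Finset ℕ, ((s.filter fun n => w n = some a).card : ℕ∞)

/-- `w` is an enumeration (representation) of the finite-or-countable multiset `m`. -/
def realizes {A : Type} (w : ℕ → Option A) (m : SMul' A) : Prop :=
  ∀ a, m.val a = occCount w a

/-- The action of `§` on a relation `f : A → B`: `§f` relates a finite-or-countable
multiset `m₁` to `m₂` when there are enumerations of `m₁` and `m₂` matched index by
index by pairs belonging to `f`. -/
def sRel {A B : Type} (f : Rel' A B) : Rel' (SMul' A) (SMul' B) :=
  {p | ∃ (w₁ : ℕ → Option A) (w₂ : ℕ → Option B),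
    realizes w₁ p.1 ∧ realizes w₂ p.2 ∧ (∀ n, w₁ n = none ↔ w₂ n = none) ∧
    ∀ n a b, w₁ n = some a → w₂ n = some b → (a, b) ∈ f}

/-- Dereliction `der_A = {([a],a) | a ∈ A} : §A → A`. -/
def sder (A : Type) : Rel' (SMul' A) A :=
  {p | ∀ a, p.1.val a = if a = p.2 then 1 else 0}

/-- Digging `dig_A : §A → §§A`, relating `Σᵢ wᵢ` to `[w₁, w₂, …]` for any finite or
countable family `(wᵢ)` of finite-or-countable multisets (sums being computed
pointwise in `ℕ∞` as suprema of finite partial sums). -/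
noncomputable def sdig (A : Type) : Rel' (SMul' A) (SMul' (SMul' A)) :=
  {p | ∃ w : ℕ → Option (SMul' A), realizes w p.2 ∧
    ∀ a, p.1.val a = ⨆ s : Finset ℕ,
      ∑ n ∈ s, (match w n with | some u => u.val a | none => 0)}

namespace ENat

variable {ι κ : Type*}

protected theorem hasSum (f : ι → ℕ∞) : HasSum f (⨆ s : Finset ι, ∑ i ∈ s, f i) :=
  tendsto_atTop_iSup (Finset.sum_mono_set f)

protected theorem summable (f : ι → ℕ∞) : Summable f :=
  (ENat.hasSum f).summable

protected theorem tsum_eq_iSup_sum (f : ι → ℕ∞) : ∑' i, f i = ⨆ s : Finset ι, ∑ i ∈ s, f i :=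
  (ENat.hasSum f).tsum_eq

protected theorem tsum_comm (f : ι → κ → ℕ∞) : ∑' i, ∑' k, f i k = ∑' k, ∑' i, f i k :=
  (ENat.summable _).tsum_comm' (fun _ => ENat.summable _) (fun _ => ENat.summable _)

protected theorem tsum_prod (f : ι × κ → ℕ∞) : ∑' p, f p = ∑' i, ∑' k, f (i, k) :=
  (ENat.summable _).tsum_prod' fun _ => ENat.summable _

theorem tsum_tsum_mul_mul (f : ι → ℕ∞) (g : ι → κ → ℕ∞) (h : κ → ℕ∞) :
    ∑' k, (∑' i, f i * g i k) * h k = ∑' i, f i * ∑' k, g i k * h k := by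
  simp_rw [← (ENat.summable _).tsum_mul_right, ← (ENat.summable _).tsum_mul_left, mul_assoc]
  exact ENat.tsum_comm _

theorem tsum_ite_natCast_lt (c : ℕ∞) : ∑' j : ℕ, (if (j : ℕ∞) < c then 1 else 0) = c := by
  induction c using ENat.recTopCoe with
  | top =>
    simp only [natCast_lt_top, if_true]
    refine eq_top_iff_forall_ge.mpr fun n => ?_
    calc (n : ℕ∞) = ∑ _ ∈ Finset.range n, (1 : ℕ∞) := by simp
      _ ≤ ∑' _ : ℕ, (1 : ℕ∞) := (ENat.summable _).sum_le_tsum _ fun _ _ => zero_le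
  | coe k =>
    rw [tsum_eq_sum (s := Finset.range k) fun j hj => if_neg (by simpa using hj)]
    rw [Finset.sum_ite_of_true fun j hj => by simpa using hj]
    simp

end ENat

section Enumerations

variable {A : Type}

theorem occCount_eq_tsum (w : ℕ → Option A) (a : A) :
    occCount w a = ∑' n, if w n = some a then 1 else 0 := by
  rw [ENat.tsum_eq_iSup_sum, occCount]
  simp_rw [Finset.card_filter, Nat.cast_sum, Nat.cast_ite, Nat.cast_one, Nat.cast_zero]

theorem realizes.unique {w : ℕ → Option A} {m m' : SMul' A} (h : realizes w m)
    (h' : realizes w m') : m = m' :=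
  Subtype.ext (funext fun a => (h a).trans (h' a).symm)

theorem realizes.tsum_elim {w : ℕ → Option A} {m : SMul' A} (hw : realizes w m)
    (F : A → ℕ∞) : ∑' n, (w n).elim 0 F = ∑' a, m.val a * F a := by
  have elim_eq_tsum : ∀ o : Option A, o.elim 0 F = ∑' a, (if o = some a then 1 else 0) * F a := by
    rintro (_ | b)
    · simp
    · rw [tsum_eq_single b fun a ha => by simp [Ne.symm ha]]
      simp
  simp_rw [elim_eq_tsum, ENat.tsum_comm fun n a => (if w n = some a then 1 else 0) * F a,
    (ENat.summable _).tsum_mul_right, ← occCount_eq_tsum, ← hw _]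

theorem exists_realizes (m : SMul' A) : ∃ w : ℕ → Option A, realizes w m := by
  let S := {a | m.val a ≠ 0}
  let : Encodable S := m.2.toEncodable
  -- the code of `(a, j)` enumerates the `j`-th copy of `a`
  let w : ℕ → Option A := fun n => (Encodable.decode₂ (S × ℕ) n).bind fun p =>
    if (p.2 : ℕ∞) < m.val p.1 then some p.1 else none
  refine ⟨w, fun a => ?_⟩
  have hsupp : Function.support (fun n => if w n = some a then (1 : ℕ∞) else 0) ⊆
      Set.range (Encodable.encode : S × ℕ → ℕ) := by
    intro n hn
    obtain ⟨p, hp, -⟩ := Option.bind_eq_some_iff.mp (by simpa using hn)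
    exact ⟨p, Encodable.mem_decode₂.mp hp⟩
  rw [occCount_eq_tsum, ← Encodable.encode_injective.tsum_eq hsupp, ENat.tsum_prod]
  simp only [w, Encodable.decode₂_encode, Option.bind_some]
  by_cases ha : m.val a = 0
  · have hne : ∀ i : S, (i : A) ≠ a := fun i h => i.2 (h ▸ ha)
    simp [ha, hne]
  · rw [tsum_eq_single (⟨a, ha⟩ : S) fun i hi => ?_]
    · simp [ENat.tsum_ite_natCast_lt]
    · have hne : (i : A) ≠ a := fun h => hi (Subtype.ext h)
      simp [hne]

end Enumerations

namespace SMul'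

variable {A B : Type}

noncomputable def single (x : A) : SMul' A :=
  ⟨fun a => if a = x then 1 else 0,
    (Set.countable_singleton x).mono fun _ ha => by_contra fun h => ha (if_neg h)⟩

noncomputable def map (g : A → B) (m : SMul' A) : SMul' B :=
  ⟨fun b => ∑' a, m.val a * if g a = b then 1 else 0, (m.2.image g).mono fun b hb => by
    obtain ⟨a, ha⟩ := (ENat.summable _).tsum_ne_zero_iff.mp hb
    exact ⟨a, left_ne_zero_of_mul ha, by_contra fun h => right_ne_zero_of_mul ha (if_neg h)⟩⟩

noncomputable def join (Θ : SMul' (SMul' A)) : SMul' A :=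
  ⟨fun a => ∑' v, Θ.val v * v.val a, (Θ.2.biUnion fun v _ => v.2).mono fun a ha => by
    obtain ⟨v, hv⟩ := (ENat.summable _).tsum_ne_zero_iff.mp ha
    exact Set.mem_biUnion (left_ne_zero_of_mul hv) (right_ne_zero_of_mul hv)⟩

theorem join_single (m : SMul' A) : join (single m) = m := by
  refine Subtype.ext (funext fun a => ?_)
  simp [join, single, tsum_ite_eq]

theorem val_join_map (g : A → SMul' B) (m : SMul' A) (b : B) :
    (join (map g m)).val b = ∑' a, m.val a * (g a).val b := by
  change ∑' v, (∑' a, m.val a * if g a = v then 1 else 0) * v.val b = _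
  rw [ENat.tsum_tsum_mul_mul]
  simp

theorem join_map_single (m : SMul' A) : join (map single m) = m := by
  refine Subtype.ext (funext fun a => ?_)
  simp [val_join_map, single]

theorem join_join (Ω : SMul' (SMul' (SMul' A))) : join (join Ω) = join (map join Ω) := by
  refine Subtype.ext (funext fun a => ?_)
  rw [val_join_map]
  exact ENat.tsum_tsum_mul_mul _ _ _

end SMul'

section Relations

open SMul'

variable {A B : Type}

theorem realizes.map {w : ℕ → Option A} {m : SMul' A} (hw : realizes w m) (g : A → B) :
    realizes (fun n => (w n).map g) (map g m) := by
  intro b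
  change ∑' a, m.val a * (if g a = b then 1 else 0) = _
  rw [occCount_eq_tsum, ← hw.tsum_elim]
  congr! 2 with n
  cases w n <;> simp

theorem mem_sder_iff {W : SMul' A} {x : A} : (W, x) ∈ sder A ↔ W = single x :=
  ⟨fun h => Subtype.ext (funext h), fun h a => by rw [h]; rfl⟩

theorem mem_sdig_iff {m : SMul' A} {W : SMul' (SMul' A)} : (m, W) ∈ sdig A ↔ m = join W := by
  have iSup_eq : ∀ (w : ℕ → Option (SMul' A)) (a : A),
      (⨆ s : Finset ℕ, ∑ n ∈ s, (match w n with | some u => u.val a | none => 0)) =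
        ∑' n, (w n).elim 0 fun u => u.val a := by
    intro w a
    rw [ENat.tsum_eq_iSup_sum]
    congr! with s n
    cases w n <;> rfl
  constructor
  · rintro ⟨w, hw, hm⟩
    exact Subtype.ext (funext fun a => by rw [hm, iSup_eq, hw.tsum_elim]; rfl)
  · rintro rfl
    obtain ⟨w, hw⟩ := exists_realizes W
    exact ⟨w, hw, fun a => by rw [iSup_eq, hw.tsum_elim]; rfl⟩

theorem mem_sRel_iff_eq_map {f : Rel' B A} {g : A → B} (hf : ∀ b a, (b, a) ∈ f ↔ b = g a)
    {W : SMul' B} {m : SMul' A} : (W, m) ∈ sRel f ↔ W = map g m := by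
  constructor
  · rintro ⟨w₁, w₂, hw₁, hw₂, hnone, hrel⟩
    have hw : w₁ = fun n => (w₂ n).map g := by
      funext n
      cases h₂ : w₂ n with
      | none => exact (hnone n).mpr h₂
      | some a =>
        obtain ⟨b, h₁⟩ : ∃ b, w₁ n = some b :=
          Option.ne_none_iff_exists'.mp fun h => by simp [(hnone n).mp h] at h₂
        rw [h₁, (hf b a).mp (hrel n b a h₁ h₂), Option.map_some]
    exact hw₁.unique (hw ▸ hw₂.map g)
  · rintro rfl
    obtain ⟨w, hw⟩ := exists_realizes m
    refine ⟨_, w, hw.map g, hw, fun _ => Option.map_eq_none_iff, fun n b a h₁ h₂ => ?_⟩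
    simp only [h₂, Option.map_some, Option.some.injEq] at h₁
    exact (hf b a).mpr h₁.symm

end Relations

/-- dereliction and digging make the finite-or-countable multiset
construction `§` a comonad on the category of sets and relations:
`der_{§A} ∘ dig_A = id`, `§der_A ∘ dig_A = id`, and
`dig_{§A} ∘ dig_A = §dig_A ∘ dig_A`. -/
theorem smul_comonad :
    (∀ A : Type, rcomp (sdig A) (sder (SMul' A)) = rid (SMul' A)) ∧
    (∀ A : Type, rcomp (sdig A) (sRel (sder A)) = rid (SMul' A)) ∧
    (∀ A : Type, rcomp (sdig A) (sdig (SMul' A)) = rcomp (sdig A) (sRel (sdig A))) := by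
  refine ⟨fun A => ?_, fun A => ?_, fun A => ?_⟩ <;> ext ⟨m, x⟩ <;>
    simp only [rcomp, rid, mem_sdig_iff, mem_sder_iff,
      mem_sRel_iff_eq_map fun _ _ => mem_sder_iff, mem_sRel_iff_eq_map fun _ _ => mem_sdig_iff,
      exists_eq_right, SMul'.join_single, SMul'.join_map_single, SMul'.join_join]
end
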